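/- Let $X$ be an infinite-dimensional complex Hilbert space with orthonormal basis $(e_n)_{n\in\mathbb{N}}$, let $A$ be the forward shift $A\sum_n x_n e_n=\sum_n x_n e_{n+1}$, and for $j\ge 1$ let $W_j=\mathrm{span}\{e_1,\dots,e_j\}$. Then for every $j,k\in\mathbb{N}$ and every $x=\sum_n x_n e_n\in X$, every element $z$ of the set $(A^j+W_j)^k x = \{A^{jk}x + w : w\in\mathrm{span}\{e_1,\dots,e_{jk}\}\}$ satisfies $\|z\| \ge |x_n|$ for all $n\in\mathbb{N}$. In particular, no element of any orbit set can tend to $0$ unless $x=0$. -/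

import Mathlib

theorem shift_mlo_extension_norm_lower_general (j k : ℕ)
    (x z : lp (fun _ : ℕ => ℂ) 2) (w : ℕ → ℂ)
    (hz : ∀ n : ℕ, (z : ℕ → ℂ) n = if n < j * k then w n else (x : ℕ → ℂ) (n - j * k)) :
    ∀ n : ℕ, ‖(x : ℕ → ℂ) n‖ ≤ ‖z‖ := by
  intro n
  have hzn : (z : ℕ → ℂ) (n + j * k) = (x : ℕ → ℂ) n := by
    rw [hz, if_neg (Nat.not_lt.mpr (Nat.le_add_left _ _)), Nat.add_sub_cancel]
  simpa only [hzn] using lp.norm_apply_le_norm two_ne_zero z (n + j * k)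

/-- in `ℓ²(ℕ, ℂ)`, if `z = A^{jk} x + w` where `A` is the forward
shift and `w ∈ span{e₁, …, e_{jk}}` (i.e. the coordinates of `z` are arbitrary on
the first `j·k` places and equal the shifted coordinates of `x` afterwards), then
`‖z‖ ≥ |xₙ|` for every coordinate `n` of `x`. -/
theorem shift_mlo_extension_norm_lower (j k : ℕ) (hj : 1 ≤ j) (hk : 1 ≤ k)
    (x z : lp (fun _ : ℕ => ℂ) 2) (w : ℕ → ℂ)
    (hz : ∀ n : ℕ, (z : ℕ → ℂ) n = if n < j * k then w n else (x : ℕ → ℂ) (n - j * k)) :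
    ∀ n : ℕ, ‖(x : ℕ → ℂ) n‖ ≤ ‖z‖ :=
  shift_mlo_extension_norm_lower_general j k x z w hz
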